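/- For every real number x, −∫₀ˣ log|sin t| dt = x · log 2 + (1/2) · ∑_{k=1}^∞ sin(2kx)/k², i.e. Υ²(x) = x·log 2 + Cl₂(2x)/2, where Cl₂(θ) = ∑_{k=1}^∞ sin(kθ)/k² is the Clausen function of order 2. -/

import Mathlib

open Real MeasureTheory Filter Topology Set

/-! Abel summation. For `|r| < 1`, taking real parts in `-log (1 - r e^{iθ}) = ∑ (r e^{iθ})ᵏ / k`
gives `-log (1 - 2 r cos θ + r²) = 2 ∑ rᵏ cos (kθ) / k`, a series dominated by a geometric one;
integrating it termwise with `θ = 2t` gives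
`-∫₀ˣ log (1 - 2 r cos 2t + r²) dt = ∑ sin (2kx) / k² · rᵏ`. Now let `r → 1⁻`. On the left,
`1 - 2 r cos 2t + r² = (1 - r)² + 4 r sin² t` tends to `4 sin² t` and, for `r ≥ 1/2`, lies between
`sin² t` and `4`, so dominated convergence applies with the integrable bound
`2 (log 2 - log |sin t|)`. On the right, Abel's limit theorem applies because `∑ sin (2kx) / k²`
converges. -/

theorem hasSum_pow_mul_cos_div {r : ℝ} (hr : |r| < 1) (θ : ℝ) :
    HasSum (fun k : ℕ => r ^ k * cos (k * θ) / k) (-log (1 - 2 * r * cos θ + r ^ 2) / 2) := by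
  set z : ℂ := r * Complex.exp (θ * Complex.I)
  have hz : ‖z‖ < 1 := by simpa [z, Complex.norm_exp_ofReal_mul_I] using hr
  have hnormSq : ‖1 - z‖ ^ 2 = 1 - 2 * r * cos θ + r ^ 2 := by
    rw [Complex.sq_norm, Complex.normSq_apply]
    simp only [z, Complex.sub_re, Complex.sub_im, Complex.one_re, Complex.one_im,
      Complex.re_ofReal_mul, Complex.im_ofReal_mul, Complex.exp_ofReal_mul_I_re,
      Complex.exp_ofReal_mul_I_im]
    linear_combination r ^ 2 * sin_sq_add_cos_sq θ
  convert Complex.hasSum_re (Complex.hasSum_taylorSeries_neg_log hz) using 1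
  · ext k
    rw [← Complex.ofReal_natCast, Complex.div_ofReal_re, mul_pow, ← Complex.exp_nat_mul,
      ← Complex.ofReal_pow, Complex.re_ofReal_mul, ← mul_assoc, ← Complex.ofReal_natCast,
      ← Complex.ofReal_mul, Complex.exp_ofReal_mul_I_re]
  · rw [Complex.neg_re, Complex.log_re, ← hnormSq, log_pow]
    push_cast
    ring

theorem integral_two_mul_pow_mul_cos_div (r x : ℝ) (k : ℕ) :
    ∫ t in (0 : ℝ)..x, 2 * (r ^ k * cos (k * (2 * t)) / k) = sin (2 * k * x) / k ^ 2 * r ^ k := by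
  rcases eq_or_ne k 0 with rfl | hk
  · simp
  have hderiv : ∀ t, HasDerivAt (fun t => sin (2 * k * t) / k ^ 2 * r ^ k)
      (2 * (r ^ k * cos (k * (2 * t)) / k)) t := by
    intro t
    refine ((((hasDerivAt_id' t).const_mul (2 * k : ℝ)).sin.div_const ((k : ℝ) ^ 2)).mul_const
      (r ^ k)).congr_deriv ?_
    field_simp
  rw [intervalIntegral.integral_eq_sub_of_hasDerivAt (fun t _ => hderiv t)
    (Continuous.intervalIntegrable (by fun_prop) _ _)]
  simp

theorem norm_pow_mul_cos_div_le (r y : ℝ) (k : ℕ) : ‖r ^ k * cos y / k‖ ≤ |r| ^ k :=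
  calc ‖r ^ k * cos y / k‖ = |r| ^ k * |cos y| / k := by
        rw [norm_div, norm_mul, norm_pow, Real.norm_eq_abs, Real.norm_eq_abs, RCLike.norm_natCast]
    _ ≤ |r| ^ k * |cos y| := div_nat_le_self_of_nonnneg (by positivity) k
    _ ≤ |r| ^ k := mul_le_of_le_one_right (by positivity) (abs_cos_le_one y)

theorem hasSum_sin_div_sq_mul_pow {r : ℝ} (hr : |r| < 1) (x : ℝ) :
    HasSum (fun k : ℕ => sin (2 * k * x) / k ^ 2 * r ^ k)
      (-∫ t in (0 : ℝ)..x, log (1 - 2 * r * cos (2 * t) + r ^ 2)) := by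
  have hsum := intervalIntegral.hasSum_integral_of_dominated_convergence
    (F := fun (k : ℕ) t => 2 * (r ^ k * cos (k * (2 * t)) / k))
    (fun k _ => 2 * |r| ^ k) (a := 0) (b := x) (μ := volume)
    (fun k => Continuous.aestronglyMeasurable (by fun_prop))
    (fun k => ae_of_all _ fun t _ => by
      rw [norm_mul, norm_two]
      exact mul_le_mul_of_nonneg_left (norm_pow_mul_cos_div_le r _ k) zero_le_two)
    (ae_of_all _ fun t _ => (summable_geometric_of_lt_one (abs_nonneg r) hr).mul_left 2)
    intervalIntegrable_const
    (ae_of_all _ fun t _ => (hasSum_pow_mul_cos_div hr (2 * t)).mul_left 2)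
  simpa only [integral_two_mul_pow_mul_cos_div, mul_div_cancel₀ _ (two_ne_zero (α := ℝ)),
    intervalIntegral.integral_neg] using hsum

theorem intervalIntegrable_log_abs_sin (a b : ℝ) :
    IntervalIntegrable (fun t => log |sin t|) volume a b := by
  simpa only [log_abs, Function.comp_def] using intervalIntegrable_log_sin

theorem ae_sin_ne_zero : ∀ᵐ t : ℝ, sin t ≠ 0 := by
  refine measure_mono_null (fun t ht => sin_eq_zero_iff.mp (not_not.mp ht))
    ((countable_range fun n : ℤ => n * π).measure_zero volume)

theorem one_sub_two_mul_cos_two_mul_add_sq (r t : ℝ) :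
    1 - 2 * r * cos (2 * t) + r ^ 2 = (1 - r) ^ 2 + 4 * r * sin t ^ 2 := by
  rw [cos_two_mul, cos_sq']
  ring

theorem abs_log_one_sub_two_mul_cos_two_mul_add_sq_le {r t : ℝ} (hr : r ∈ Icc (1 / 2) 1)
    (ht : sin t ≠ 0) :
    |log (1 - 2 * r * cos (2 * t) + r ^ 2)| ≤ 2 * (log 2 - log |sin t|) := by
  rw [one_sub_two_mul_cos_two_mul_add_sq]
  have hsin_pos : 0 < sin t ^ 2 := by positivity
  have hsin_le : sin t ^ 2 ≤ 1 := sin_sq_le_one t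
  have hlower : sin t ^ 2 ≤ (1 - r) ^ 2 + 4 * r * sin t ^ 2 := by nlinarith [hr.1]
  have hupper : (1 - r) ^ 2 + 4 * r * sin t ^ 2 ≤ 2 ^ 2 := by nlinarith [hr.1, hr.2]
  have hlog_sin : log |sin t| ≤ 0 := log_nonpos (abs_nonneg _) (abs_sin_le_one t)
  have hlog_two : 0 ≤ log 2 := log_nonneg one_le_two
  have h1 := log_le_log hsin_pos hlower
  have h2 := log_le_log (hsin_pos.trans_le hlower) hupper
  rw [log_pow, ← log_abs] at h1
  rw [log_pow] at h2
  push_cast at h1 h2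
  rw [abs_le]
  constructor <;> linarith

theorem tendsto_integral_log_one_sub_two_mul_cos_two_mul_add_sq (x : ℝ) :
    Tendsto (fun r => ∫ t in (0 : ℝ)..x, log (1 - 2 * r * cos (2 * t) + r ^ 2)) (𝓝[<] 1)
      (𝓝 (∫ t in (0 : ℝ)..x, 2 * (log 2 + log |sin t|))) := by
  have hnear : ∀ᶠ r in 𝓝[<] (1 : ℝ), r ∈ Icc (1 / 2) 1 :=
    mem_of_superset (Ioo_mem_nhdsLT (by norm_num)) Ioo_subset_Icc_self
  refine intervalIntegral.tendsto_integral_filter_of_dominated_convergence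
    (fun t => 2 * (log 2 - log |sin t|))
    (Eventually.of_forall fun r => Measurable.aestronglyMeasurable (by fun_prop))
    ?_ ((intervalIntegrable_const.sub (intervalIntegrable_log_abs_sin 0 x)).const_mul 2) ?_
  · filter_upwards [hnear] with r hr
    filter_upwards [ae_sin_ne_zero] with t ht _
    exact abs_log_one_sub_two_mul_cos_two_mul_add_sq_le hr ht
  · filter_upwards [ae_sin_ne_zero] with t ht _
    have hval : 1 - 2 * 1 * cos (2 * t) + 1 ^ 2 = (2 * sin t) ^ 2 := by
      rw [one_sub_two_mul_cos_two_mul_add_sq]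
      ring
    have hcont : ContinuousAt (fun r => log (1 - 2 * r * cos (2 * t) + r ^ 2)) 1 :=
      (by fun_prop : ContinuousAt (fun r => 1 - 2 * r * cos (2 * t) + r ^ 2) 1).log
        (by rw [hval]; positivity)
    convert hcont.tendsto.mono_left nhdsWithin_le_nhds using 2
    rw [hval, log_pow, log_mul two_ne_zero ht, log_abs]
    push_cast
    ring

theorem upsilon_two_eq (x : ℝ) :
    -∫ t in (0:ℝ)..x, Real.log |Real.sin t| =
      x * Real.log 2 + (1 / 2) * ∑' k : ℕ+, Real.sin (2 * k * x) / (k : ℝ) ^ 2 := by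
  have hsummable : Summable fun k : ℕ => sin (2 * k * x) / k ^ 2 :=
    .of_norm_bounded (Real.summable_one_div_nat_pow.mpr one_lt_two) fun k => by
      rw [norm_div, norm_pow, Real.norm_eq_abs, RCLike.norm_natCast]
      exact div_le_div_of_nonneg_right (abs_sin_le_one _) (by positivity)
  have habel := Real.tendsto_tsum_powerSeries_nhdsWithin_lt hsummable.hasSum.tendsto_sum_nat
  have hseries : ∀ᶠ r in 𝓝[<] (1 : ℝ),
      -∫ t in (0 : ℝ)..x, log (1 - 2 * r * cos (2 * t) + r ^ 2) =
        ∑' k : ℕ, sin (2 * k * x) / k ^ 2 * r ^ k := by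
    filter_upwards [Ioo_mem_nhdsLT (show (-1 : ℝ) < 1 by norm_num)] with r hr
    exact (hasSum_sin_div_sq_mul_pow (abs_lt.mpr hr) x).tsum_eq.symm
  have hlimit := tendsto_nhds_unique
    ((tendsto_integral_log_one_sub_two_mul_cos_two_mul_add_sq x).neg.congr' hseries) habel
  rw [intervalIntegral.integral_const_mul, intervalIntegral.integral_add intervalIntegrable_const
    (intervalIntegrable_log_abs_sin 0 x), intervalIntegral.integral_const, smul_eq_mul,
    sub_zero] at hlimit
  rw [tsum_pnat_eq_tsum_of_eq_zero (f := fun k : ℕ => sin (2 * k * x) / k ^ 2) (by simp)]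
  linarith
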